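/- arXiv:1910.02559 — 2 statements merged into one kernel-verified Lean document; each statement's English description precedes it below -/
import Mathlib

section
/- The z-variable propagation constraints of formulation 3IF prevent crossing sorties: suppose z : N → {0,1}, a truck Hamiltonian-type path v(0),…,v(q), launches ℓ(v) ∈ {0,1} and returns r(v) ∈ {0,1} marking whether a sortie is launched (resp. terminates) at each node, satisfying (i) ℓ(v) ≤ z(v) for every node, (ii) z(v(h+1)) ≤ z(v(h)) − ℓ(v(h)) + r(v(h+1)), and (iii) at most one sortie is in flight initially (z(v(0)) ≤ 1). Then between any launch at v(a) and the first subsequent return at v(b) (a < b), no launch occurs at nodes v(a+1), …, v(b−1). -/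
/-! Once a sortie is launched at `v(a)`, constraint (ii) with `z(v(a)) ≤ 1` and `ℓ(v(a)) = 1`
forces `z(v(a+1)) = 0`, and as long as no rendezvous occurs (ii) keeps `z` at `0`. A launch at
any node strictly before the first return would then violate (i), `ℓ ≤ z`. -/

theorem eq_zero_after_launch_of_no_return {z ℓ r : ℕ → ℕ} {a n : ℕ} (han : a < n)
    (hprop : ∀ h, a ≤ h → h < n → z (h + 1) + ℓ h ≤ z h + r (h + 1))
    (hza : z a ≤ 1) (hla : ℓ a = 1) (hr : ∀ h, a < h → h ≤ n → r h = 0) : z n = 0 := by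
  induction n, han using Nat.le_induction with
  | base =>
    show z (a + 1) = 0
    have hlaunch_step := hprop a le_rfl (Nat.lt_succ_self a)
    have hno_return := hr (a + 1) (Nat.lt_succ_self a) le_rfl
    omega
  | succ n hn ih =>
    have hzn : z n = 0 :=
      ih (fun h h₁ h₂ => hprop h h₁ (by omega)) (fun h h₁ h₂ => hr h h₁ (by omega))
    have hstep := hprop n (by omega) (Nat.lt_succ_self n)
    have hno_return := hr (n + 1) (by omega) le_rfl
    omega

theorem stmt_7_general (q : ℕ) (z ℓ r : ℕ → ℕ)
    (hz : ∀ h ≤ q, z h = 0 ∨ z h = 1)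
    (hlz : ∀ h ≤ q, ℓ h ≤ z h)
    (hprop : ∀ h, h + 1 ≤ q → z (h + 1) + ℓ h ≤ z h + r (h + 1))
    (a b : ℕ) (hbq : b ≤ q)
    (hlaunch : ℓ a = 1)
    (hfirst : ∀ h, a < h → h < b → r h = 0) :
    ∀ h, a < h → h < b → ℓ h = 0 := by
  intro h hah hhb
  have hza : z a ≤ 1 := by rcases hz a (by omega) with hza | hza <;> omega
  have hzh : z h = 0 :=
    eq_zero_after_launch_of_no_return hah (fun k _ hk => hprop k (by omega)) hza hlaunch
      (fun k hk₁ hk₂ => hfirst k hk₁ (by omega))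
  simpa [hzh] using hlz h (by omega)

/-- The `z`-variable propagation constraints of 3IF prevent crossing sorties:
between a launch at position `a` and the first subsequent return at position
`b`, no other launch occurs. Here `z h`, `ℓ h`, `r h` are the (binary)
drone-on-truck, launch and return indicators at the `h`-th route node. -/
theorem stmt_7 (q : ℕ) (z ℓ r : ℕ → ℕ)
    (hz : ∀ h ≤ q, z h = 0 ∨ z h = 1)
    (hℓ : ∀ h ≤ q, ℓ h = 0 ∨ ℓ h = 1)
    (hr : ∀ h ≤ q, r h = 0 ∨ r h = 1)
    (hlz : ∀ h ≤ q, ℓ h ≤ z h)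
    (hprop : ∀ h, h + 1 ≤ q → z (h + 1) + ℓ h ≤ z h + r (h + 1))
    (hz0 : z 0 ≤ 1)
    (a b : ℕ) (hab : a < b) (hbq : b ≤ q)
    (hlaunch : ℓ a = 1) (hret : r b = 1)
    (hfirst : ∀ h, a < h → h < b → r h = 0) :
    ∀ h, a < h → h < b → ℓ h = 0 :=
  stmt_7_general q z ℓ r hz hlz hprop a b hbq hlaunch hfirst
end

section
/- Validity of the tournament crossing-sorties elimination constraint: let P = (v(1), …, v(q)) be a directed path of distinct nodes, and suppose a feasible integer solution has x(v(h), v(h+1)) = 1 for all consecutive pairs of P, a sortie launched at v(1) towards a customer j, no rendezvous at any interior node of P, and a second sortie launched at v(q). Then the left-hand side ∑_{h<j} x(v(h),v(j)) + ∑_{j∉P} g→(v(1),j) + ∑_{j∉P} g→(v(q),j) equals |P| + 1 > |P|, so the constraint ∑_{h<j} x(v(h),v(j)) + ∑_{j∉P} g→(v(1),j) + ∑_{j∉P} g→(v(q),j) ≤ |P| is violated by exactly the crossing configurations and satisfied by all non-crossing feasible solutions in which the truck follows P consecutively. -/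
open Finset

lemma sum_eq_one_of_mem_of_sum_le_one {ι : Type*} {s t : Finset ι} {f : ι → ℕ}
    (hst : s ⊆ t) (ht : ∑ i ∈ t, f i ≤ 1) {a : ι} (ha : a ∈ s) (hfa : f a = 1) :
    ∑ i ∈ s, f i = 1 := by
  have hle : ∑ i ∈ s, f i ≤ 1 := (sum_le_sum_of_subset hst).trans ht
  have hge : 1 ≤ ∑ i ∈ s, f i := hfa ▸ single_le_sum (fun _ _ => Nat.zero_le _) ha
  omega

section Path

variable {Node : Type*} [Fintype Node] (x : Node → Node → ℕ) {q : ℕ} (v : Fin q → Node)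

/-- Out-degree at most one forces the only forward arc leaving `v h` to be the path arc. -/
lemma sum_forward_arcs_from_eq (hxout : ∀ i, ∑ j, x i j ≤ 1) (hv : Function.Injective v)
    (hpath : ∀ h : Fin q, (hh : (h : ℕ) + 1 < q) → x (v h) (v ⟨h + 1, hh⟩) = 1) (h : Fin q) :
    ∑ l, (if h < l then x (v h) (v l) else 0) = if (h : ℕ) + 1 < q then 1 else 0 := by
  rw [← sum_filter]
  split_ifs with hh
  · refine (sum_map _ ⟨v, hv⟩ (x (v h))).symm.trans ?_
    have hsucc : (⟨h + 1, hh⟩ : Fin q) ∈ univ.filter (h < ·) := by simp [← Fin.val_fin_lt]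
    exact sum_eq_one_of_mem_of_sum_le_one (subset_univ _) (hxout _)
      (mem_map_of_mem ⟨v, hv⟩ hsucc) (hpath h hh)
  · refine sum_eq_zero fun l hl => absurd (mem_filter.1 hl).2 ?_
    rw [Fin.lt_def]
    omega

lemma sum_forward_arcs_eq (hxout : ∀ i, ∑ j, x i j ≤ 1) (hv : Function.Injective v)
    (hpath : ∀ h : Fin q, (hh : (h : ℕ) + 1 < q) → x (v h) (v ⟨h + 1, hh⟩) = 1) :
    ∑ h, ∑ l, (if h < l then x (v h) (v l) else 0) = q - 1 := by
  simp_rw [sum_forward_arcs_from_eq x v hxout hv hpath]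
  rw [Fin.sum_univ_eq_sum_range (fun i => if i + 1 < q then 1 else 0), sum_boole,
    Nat.cast_id]
  have hrange : (range q).filter (· + 1 < q) = range (q - 1) := by
    ext i
    simp only [mem_filter, mem_range]
    omega
  rw [hrange, card_range]

end Path

/-- Validity of the tournament crossing-sorties elimination constraint: if the
truck follows the path `v 0, …, v (q-1)` of `q ≥ 2` distinct nodes
consecutively, a sortie is launched at the first node towards a customer
outside the path, and a second sortie is launched at the last node towards a
customer outside the path, then the left-hand side of the tournament
constraint equals `q + 1 > q = |P|`, i.e. the constraint is violated. -/
theorem stmt_14 {Node : Type*} [Fintype Node] [DecidableEq Node]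
    (x g : Node → Node → ℕ)
    -- at most one outgoing truck arc per node
    (hxout : ∀ i, (∑ j : Node, x i j) ≤ 1)
    -- at most one launch per node
    (hgout : ∀ i, (∑ j : Node, g i j) ≤ 1)
    (q : ℕ) (hq : 2 ≤ q) (v : Fin q → Node) (hv : Function.Injective v)
    -- the truck travels the path consecutively
    (hpath : ∀ h : Fin q, (hh : (h : ℕ) + 1 < q) → x (v h) (v ⟨h + 1, hh⟩) = 1)
    -- a sortie launched at the first node of P towards a customer not in P
    (j0 : Node) (hj0 : ∀ h : Fin q, v h ≠ j0)
    (hlaunch0 : g (v ⟨0, by omega⟩) j0 = 1)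
    -- a second sortie launched at the last node of P towards a customer not in P
    (j1 : Node) (hj1 : ∀ h : Fin q, v h ≠ j1)
    (hlaunch1 : g (v ⟨q - 1, by omega⟩) j1 = 1) :
    (∑ h : Fin q, ∑ l : Fin q, if h < l then x (v h) (v l) else 0)
      + (∑ j ∈ Finset.univ.filter (fun j : Node => ∀ h : Fin q, v h ≠ j),
          g (v ⟨0, by omega⟩) j)
      + (∑ j ∈ Finset.univ.filter (fun j : Node => ∀ h : Fin q, v h ≠ j),
          g (v ⟨q - 1, by omega⟩) j)
      = q + 1 := by
  have launch_sum : ∀ i j, g i j = 1 → (∀ h : Fin q, v h ≠ j) →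
      ∑ j' ∈ univ.filter (fun j' => ∀ h : Fin q, v h ≠ j'), g i j' = 1 :=
    fun i j hij hjP => sum_eq_one_of_mem_of_sum_le_one (filter_subset _ _) (hgout i)
      (mem_filter.2 ⟨mem_univ _, hjP⟩) hij
  rw [sum_forward_arcs_eq x v hxout hv hpath, launch_sum _ j0 hlaunch0 hj0,
    launch_sum _ j1 hlaunch1 hj1]
  omega
end
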